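/- Fix β ∈ [0,1] and suppose ∫ π_β |ℓ| dμ < ∞, ∫ π_β |log q₀| dμ < ∞, and L is differentiable at β with L′(β) = ∫ π_β ℓ dμ. Then the cross-entropy h_β(η) := −∫ π_β log π_η dμ is differentiable at η = β with h_β′(β) = 0; i.e., the first-order term in the Taylor expansion of η ↦ h_β(η) around η = β vanishes. -/

import Mathlib

open MeasureTheory Real Filter

noncomputable section

variable {X : Type*} [MeasurableSpace X]

/-- Geometric annealing path `γ_η = q₀^{1-η} p^η`, set to `0` where `q₀` vanishes. -/
def gammaPath (q0 p : X → ℝ) (η : ℝ) (z : X) : ℝ :=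
  if q0 z = 0 then 0 else q0 z ^ (1 - η) * p z ^ η

/-- Normalization constant `Z_η = ∫ γ_η dμ` along the annealing path. -/
def Zpath (μ : Measure X) (q0 p : X → ℝ) (η : ℝ) : ℝ :=
  ∫ z, gammaPath q0 p η z ∂μ

/-- Normalized annealing density `π_η = γ_η / Z_η`. -/
def piPath (μ : Measure X) (q0 p : X → ℝ) (η : ℝ) (z : X) : ℝ :=
  gammaPath q0 p η z / Zpath μ q0 p η

/-- Kullback–Leibler divergence `D_KL(a‖b) = ∫ a log(a/b) dμ` between densities. -/
def KLdiv (μ : Measure X) (a b : X → ℝ) : ℝ :=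
  ∫ z, a z * Real.log (a z / b z) ∂μ


/-- `ℓ = log(p/q₀)`. -/
def ell (q0 p : X → ℝ) (z : X) : ℝ := Real.log (p z / q0 z)

/-!
Where `π_β > 0` we have `log π_η = log q₀ + η ℓ - L(η)`, so near `β` the cross-entropy equals
`L(η) - ∫ π_β log q₀ - η ∫ π_β ℓ`, whose derivative at `β` is `L′(β) - ∫ π_β ℓ = 0`.

The work is at the endpoints `β ∈ {0, 1}`, where `Z` must be shown positive on a full neighbourhood
of `β`. Since `γ_η ≤ γ_a + γ_b` for `a ≤ η ≤ b`, the set `{Z > 0}` is an interval; if it stopped at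
the endpoint, `L` would be constant on one side and `L′(β) = 0`, whereas `L′(0) = -KL(q₀‖p)` and
`L′(1) = KL(p‖q₀)`. Gibbs' inequality then gives `q₀ = p`, hence `Z ≡ 1`, a contradiction. At
`β = 0` we also need `q₀ ≪ p`: by dominated convergence `Z_η → q₀{p > 0}` as `η → 0⁺`, and
continuity of `L` at `0` forces this to be `1`.
-/

open Set Topology

lemma mul_log_div_le_sub {a b : ℝ} (ha : 0 ≤ a) (hb : 0 ≤ b) (hab : 0 < a → 0 < b) :
    a * log (b / a) ≤ b - a := by
  rcases ha.eq_or_lt with rfl | ha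
  · simpa using hb
  have := mul_le_mul_of_nonneg_left (log_le_sub_one_of_pos (div_pos (hab ha) ha)) ha.le
  rwa [mul_sub_one, mul_div_cancel₀ _ ha.ne'] at this

lemma eq_of_mul_log_div_eq_sub {a b : ℝ} (ha : 0 ≤ a) (hab : 0 < a → 0 < b)
    (h : a * log (b / a) = b - a) : a = b := by
  rcases ha.eq_or_lt with rfl | ha
  · simpa using h
  by_contra hne
  have hlt := mul_lt_mul_of_pos_left
    (log_lt_sub_one_of_pos (div_pos (hab ha) ha) (div_ne_one_of_ne (Ne.symm hne))) ha
  rw [mul_sub_one, mul_div_cancel₀ _ ha.ne'] at hlt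
  exact hlt.ne h

lemma rpow_le_rpow_add_rpow {r a η b : ℝ} (hr : 0 < r) (ha : a ≤ η) (hb : η ≤ b) :
    r ^ η ≤ r ^ a + r ^ b := by
  rcases le_total 1 r with h1 | h1
  · exact (rpow_le_rpow_of_exponent_le h1 hb).trans (le_add_of_nonneg_left (rpow_nonneg hr.le _))
  · exact (rpow_le_rpow_of_exponent_ge hr h1 ha).trans
      (le_add_of_nonneg_right (rpow_nonneg hr.le _))

lemma HasDerivAt.eq_zero_of_eventuallyEq_const {𝕜 F : Type*} [NontriviallyNormedField 𝕜]
    [NormedAddCommGroup F] [NormedSpace 𝕜 F] {f : 𝕜 → F} {f' : F} {x : 𝕜} {s : Set 𝕜}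
    (hf : HasDerivAt f f' x) (hs : UniqueDiffWithinAt 𝕜 s x) (h : f =ᶠ[𝓝[s] x] fun _ => f x) :
    f' = 0 :=
  hs.eq_deriv s hf.hasDerivWithinAt ((hasDerivWithinAt_const x s (f x)).congr_of_eventuallyEq h rfl)

section

variable {α : Type*} [MeasurableSpace α] {μ : Measure α}

lemma MeasureTheory.Integrable.mul_of_integrable_mul_abs {f g : α → ℝ} (hf : ∀ z, 0 ≤ f z)
    (hfg : AEStronglyMeasurable (fun z => f z * g z) μ)
    (h : Integrable (fun z => f z * |g z|) μ) : Integrable (fun z => f z * g z) μ :=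
  h.mono' hfg (ae_of_all _ fun z => by rw [norm_mul, norm_of_nonneg (hf z), norm_eq_abs])

/-- Equality case of Gibbs' inequality. -/
theorem ae_eq_of_integral_mul_log_div_eq_zero {a b : α → ℝ} (ha : ∀ z, 0 ≤ a z)
    (hb : ∀ z, 0 ≤ b z) (hai : Integrable a μ) (hbi : Integrable b μ)
    (hab : ∫ z, a z ∂μ = ∫ z, b z ∂μ) (hsupp : ∀ᵐ z ∂μ, 0 < a z → 0 < b z)
    (hint : Integrable (fun z => a z * log (b z / a z)) μ)
    (h0 : ∫ z, a z * log (b z / a z) ∂μ = 0) : a =ᵐ[μ] b := by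
  set gap : α → ℝ := fun z => b z - a z - a z * log (b z / a z)
  have hba : Integrable (fun z => b z - a z) μ := hbi.sub hai
  have hgap_int : Integrable gap μ := hba.sub hint
  have hgap_nonneg : 0 ≤ᵐ[μ] gap := by
    filter_upwards [hsupp] with z hz
    exact sub_nonneg.mpr (mul_log_div_le_sub (ha z) (hb z) hz)
  have hgap_zero : gap =ᵐ[μ] 0 := by
    refine (integral_eq_zero_iff_of_nonneg_ae hgap_nonneg hgap_int).mp ?_
    rw [integral_sub hba hint, integral_sub hbi hai, hab, h0, sub_self, sub_zero]
  filter_upwards [hsupp, hgap_zero] with z hz hgz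
  exact eq_of_mul_log_div_eq_sub (ha z) hz (sub_eq_zero.mp hgz).symm

end

section

variable {α : Type*} {q0 p : α → ℝ} {η : ℝ}

lemma gammaPath_nonneg (hq0 : ∀ z, 0 ≤ q0 z) (hp : ∀ z, 0 ≤ p z) (η : ℝ) (z : α) :
    0 ≤ gammaPath q0 p η z := by
  unfold gammaPath
  split_ifs
  · exact le_rfl
  · exact mul_nonneg (rpow_nonneg (hq0 z) _) (rpow_nonneg (hp z) _)

lemma gammaPath_zero (z : α) : gammaPath q0 p 0 z = q0 z := by
  unfold gammaPath
  split_ifs with h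
  · exact h.symm
  · simp

lemma gammaPath_of_pos {z : α} (hq : 0 < q0 z) (hp : 0 ≤ p z) (η : ℝ) :
    gammaPath q0 p η z = q0 z * (p z / q0 z) ^ η := by
  rw [gammaPath, if_neg hq.ne', rpow_sub hq, rpow_one, div_rpow hp hq.le]
  field_simp

lemma gammaPath_of_eq {z : α} (hq0 : ∀ z, 0 ≤ q0 z) (h : q0 z = p z) (η : ℝ) :
    gammaPath q0 p η z = q0 z := by
  rcases (hq0 z).eq_or_lt with hq | hq
  · rw [gammaPath, if_pos hq.symm, hq]
  · rw [gammaPath_of_pos hq (h ▸ hq0 z), ← h, div_self hq.ne', one_rpow, mul_one]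

lemma support_gammaPath (hq0 : ∀ z, 0 ≤ q0 z) (hp : ∀ z, 0 ≤ p z) (hη : η ≠ 0) :
    Function.support (gammaPath q0 p η) = {z | 0 < q0 z ∧ 0 < p z} := by
  ext z
  rcases (hq0 z).eq_or_lt with hq | hq
  · simp [gammaPath, ← hq]
  · simp [gammaPath, hq, hq.ne', (hp z).lt_iff_ne', rpow_eq_zero (hp z) hη,
      (rpow_pos_of_pos hq (1 - η)).ne']

lemma gammaPath_le_add (hq0 : ∀ z, 0 ≤ q0 z) (hp : ∀ z, 0 ≤ p z) {a b : ℝ} (ha : a ≤ η) (hb : η ≤ b)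
    (hη : η ≠ 0) (z : α) :
    gammaPath q0 p η z ≤ gammaPath q0 p a z + gammaPath q0 p b z := by
  have hsum := add_nonneg (gammaPath_nonneg hq0 hp a z) (gammaPath_nonneg hq0 hp b z)
  rcases (hq0 z).eq_or_lt with hq | hq
  · rwa [gammaPath, if_pos hq.symm]
  rcases (hp z).eq_or_lt with hpz | hpz
  · rwa [gammaPath, if_neg hq.ne', ← hpz, zero_rpow hη, mul_zero]
  simp only [gammaPath_of_pos hq (hp z), ← mul_add]
  exact mul_le_mul_of_nonneg_left (rpow_le_rpow_add_rpow (div_pos hpz hq) ha hb) hq.le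

end

section

variable {μ : Measure X} {q0 p : X → ℝ} {η β : ℝ}

lemma measurable_gammaPath (hq0 : Measurable q0) (hp : Measurable p) (η : ℝ) :
    Measurable (gammaPath q0 p η) :=
  Measurable.ite (hq0 (measurableSet_singleton 0)) measurable_const
    ((hq0.pow_const _).mul (hp.pow_const _))

lemma gammaPath_one_ae_eq (hp : ∀ z, 0 ≤ p z) (hsupp : ∀ᵐ z ∂μ, 0 < p z → 0 < q0 z) :
    gammaPath q0 p 1 =ᵐ[μ] p := by
  filter_upwards [hsupp] with z hz
  unfold gammaPath
  split_ifs with hq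
  · exact (le_antisymm (not_lt.mp fun h => (hz h).ne' hq) (hp z)).symm
  · simp

lemma log_piPath_of_pos {z : X} (hq : 0 < q0 z) (hp : 0 < p z)
    (hZ : 0 < Zpath μ q0 p η) :
    log (piPath μ q0 p η z) = log (q0 z) + η * ell q0 p z - log (Zpath μ q0 p η) := by
  rw [piPath, gammaPath, if_neg hq.ne', log_div (by positivity) hZ.ne',
    log_mul (by positivity) (by positivity), log_rpow hq, log_rpow hp, ell, log_div hp.ne' hq.ne']
  ring

lemma Zpath_zero : Zpath μ q0 p 0 = ∫ z, q0 z ∂μ := by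
  simp only [Zpath, gammaPath_zero]

lemma Zpath_of_ae_eq (hq0 : ∀ z, 0 ≤ q0 z) (h : q0 =ᵐ[μ] p) (η : ℝ) :
    Zpath μ q0 p η = ∫ z, q0 z ∂μ :=
  integral_congr_ae (h.mono fun _ hz => gammaPath_of_eq hq0 hz η)

lemma Zpath_pos_iff (hq0 : ∀ z, 0 ≤ q0 z) (hp : ∀ z, 0 ≤ p z) (hη : η ≠ 0)
    (hint : Integrable (gammaPath q0 p η) μ) :
    0 < Zpath μ q0 p η ↔ 0 < μ {z | 0 < q0 z ∧ 0 < p z} := by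
  rw [Zpath, integral_pos_iff_support_of_nonneg (gammaPath_nonneg hq0 hp η) hint,
    support_gammaPath hq0 hp hη]

lemma ordConnected_setOf_Zpath_pos (hq0m : Measurable q0) (hpm : Measurable p)
    (hq0 : ∀ z, 0 ≤ q0 z) (hp : ∀ z, 0 ≤ p z) (hq0_pos : 0 < ∫ z, q0 z ∂μ) :
    OrdConnected {η | 0 < Zpath μ q0 p η} := by
  refine ordConnected_def.mpr fun a ha b hb η hη => ?_
  rcases eq_or_ne η 0 with rfl | hη0
  · simpa [Zpath_zero] using hq0_pos
  have hpos_int : ∀ {t}, 0 < Zpath μ q0 p t → Integrable (gammaPath q0 p t) μ :=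
    fun h => Integrable.of_integral_ne_zero h.ne'
  have hηint : Integrable (gammaPath q0 p η) μ :=
    ((hpos_int ha).add (hpos_int hb)).mono' (measurable_gammaPath hq0m hpm η).aestronglyMeasurable
      (ae_of_all _ fun z => (norm_of_nonneg (gammaPath_nonneg hq0 hp η z)).trans_le
        (gammaPath_le_add hq0 hp hη.1 hη.2 hη0 z))
  refine (Zpath_pos_iff hq0 hp hη0 hηint).mpr ?_
  rcases eq_or_ne a 0 with rfl | ha0
  · exact (Zpath_pos_iff hq0 hp (lt_of_lt_of_le (hη.1.lt_of_ne' hη0) hη.2).ne' (hpos_int hb)).mp hb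
  · exact (Zpath_pos_iff hq0 hp ha0 (hpos_int ha)).mp ha

lemma tendsto_Zpath_nhdsGT_zero (hq0m : Measurable q0) (hpm : Measurable p)
    (hq0 : ∀ z, 0 ≤ q0 z) (hp : ∀ z, 0 ≤ p z) (hq0i : Integrable q0 μ) (hpi : Integrable p μ) :
    Tendsto (Zpath μ q0 p) (𝓝[>] 0) (𝓝 (∫ z, {z | 0 < p z}.indicator q0 z ∂μ)) := by
  refine tendsto_integral_filter_of_dominated_convergence (fun z => q0 z + p z)
    (.of_forall fun η => (measurable_gammaPath hq0m hpm η).aestronglyMeasurable) ?_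
    (hq0i.add hpi) (ae_of_all _ fun z => ?_)
  · filter_upwards [Ioo_mem_nhdsGT zero_lt_one] with η hη
    refine ae_of_all _ fun z => (norm_of_nonneg (gammaPath_nonneg hq0 hp η z)).trans_le ?_
    have h1 : gammaPath q0 p 1 z ≤ p z := by
      unfold gammaPath; split_ifs
      exacts [hp z, by simp]
    have := gammaPath_le_add hq0 hp hη.1.le hη.2.le hη.1.ne' z
    rw [gammaPath_zero] at this
    linarith
  rcases (hq0 z).eq_or_lt with hq | hq
  · simp [gammaPath, indicator_apply, ← hq]
  rcases (hp z).eq_or_lt with hpz | hpz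
  · refine tendsto_const_nhds.congr' ?_
    filter_upwards [self_mem_nhdsWithin] with η (hη : 0 < η)
    simp [gammaPath, hq.ne', ← hpz, zero_rpow hη.ne']
  · rw [indicator_of_mem (show z ∈ {z | 0 < p z} from hpz)]
    have hcont : ContinuousAt (fun η : ℝ => q0 z ^ (1 - η) * p z ^ η) 0 :=
      (continuousAt_const.rpow (continuousAt_const.sub continuousAt_id) (.inl hq.ne')).mul
        (continuousAt_const.rpow continuousAt_id (.inl hpz.ne'))
    simpa [gammaPath, hq.ne'] using hcont.tendsto.mono_left nhdsWithin_le_nhds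

lemma ae_pos_of_continuousAt_log_Zpath (hq0m : Measurable q0) (hpm : Measurable p)
    (hq0 : ∀ z, 0 ≤ q0 z) (hp : ∀ z, 0 ≤ p z) (hq0one : ∫ z, q0 z ∂μ = 1)
    (hpi : Integrable p μ) (hZ : ∀ η ∈ Ioo (0 : ℝ) 1, 0 < Zpath μ q0 p η)
    (hL : ContinuousAt (fun η => log (Zpath μ q0 p η)) 0) :
    ∀ᵐ z ∂μ, 0 < q0 z → 0 < p z := by
  have hq0i : Integrable q0 μ := .of_integral_ne_zero (by simp [hq0one])
  have hZ1 : Tendsto (Zpath μ q0 p) (𝓝[>] 0) (𝓝 1) := by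
    have := (hL.tendsto.mono_left (nhdsWithin_le_nhds (s := Ioi 0))).rexp
    rw [Zpath_zero, hq0one, log_one, exp_zero] at this
    refine this.congr' ?_
    filter_upwards [Ioo_mem_nhdsGT zero_lt_one] with η hη using exp_log (hZ η hη)
  set g := {z | 0 < p z}.indicator q0
  have hgi : Integrable g μ := hq0i.indicator (measurableSet_lt measurable_const hpm)
  have hg_one : ∫ z, g z ∂μ = 1 :=
    tendsto_nhds_unique (tendsto_Zpath_nhdsGT_zero hq0m hpm hq0 hp hq0i hpi) hZ1
  have hqg : q0 - g =ᵐ[μ] 0 := by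
    refine (integral_eq_zero_iff_of_nonneg
      (fun z => sub_nonneg.mpr (indicator_le_self' (fun z _ => hq0 z) z)) (hq0i.sub hgi)).mp ?_
    rw [integral_sub hq0i hgi, hq0one, hg_one, sub_self]
  filter_upwards [hqg] with z hz hq
  have hgz : g z ≠ 0 := by rw [← sub_eq_zero.mp hz]; exact hq.ne'
  exact (indicator_apply_ne_zero.mp hgz).1

lemma eventually_nhds_zero_Zpath_pos (hq0m : Measurable q0) (hpm : Measurable p)
    (hq0 : ∀ z, 0 ≤ q0 z) (hp : ∀ z, 0 ≤ p z) (hq0one : ∫ z, q0 z ∂μ = 1)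
    (hpone : ∫ z, p z ∂μ = 1) (hq0p : ∀ᵐ z ∂μ, 0 < q0 z → 0 < p z)
    (hZ1 : 0 < Zpath μ q0 p 1) (hint : Integrable (fun z => q0 z * ell q0 p z) μ)
    (hL : HasDerivAt (fun η => log (Zpath μ q0 p η)) (∫ z, q0 z * ell q0 p z ∂μ) 0) :
    ∀ᶠ η in 𝓝 0, 0 < Zpath μ q0 p η := by
  by_cases hneg : ∃ η < 0, 0 < Zpath μ q0 p η
  · obtain ⟨η, hη, hZη⟩ := hneg
    filter_upwards [Ioo_mem_nhds hη one_pos] with t ht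
    exact (ordConnected_setOf_Zpath_pos hq0m hpm hq0 hp (by simp [hq0one])).out hZη hZ1
      ⟨ht.1.le, ht.2.le⟩
  push Not at hneg
  have hm : ∫ z, q0 z * ell q0 p z ∂μ = 0 := by
    refine hL.eq_zero_of_eventuallyEq_const (uniqueDiffWithinAt_Iio 0) ?_
    -- `Z η = 0` for `η < 0`, also when `γ_η` is not integrable (Bochner junk value)
    filter_upwards [self_mem_nhdsWithin] with η (hη : η < 0)
    rw [Zpath_zero, hq0one, le_antisymm (hneg η hη) (integral_nonneg (gammaPath_nonneg hq0 hp η)),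
      log_zero, log_one]
  have hqp : q0 =ᵐ[μ] p := ae_eq_of_integral_mul_log_div_eq_zero hq0 hp
    (.of_integral_ne_zero (by simp [hq0one])) (.of_integral_ne_zero (by simp [hpone]))
    (hq0one.trans hpone.symm) hq0p hint hm
  have := hneg (-1) (by norm_num)
  rw [Zpath_of_ae_eq hq0 hqp, hq0one] at this
  norm_num at this

lemma eventually_nhds_one_Zpath_pos (hq0m : Measurable q0) (hpm : Measurable p)
    (hq0 : ∀ z, 0 ≤ q0 z) (hp : ∀ z, 0 ≤ p z) (hq0one : ∫ z, q0 z ∂μ = 1)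
    (hpone : ∫ z, p z ∂μ = 1) (hsupp : ∀ᵐ z ∂μ, 0 < p z → 0 < q0 z)
    (hint : Integrable (fun z => p z * ell q0 p z) μ)
    (hL : HasDerivAt (fun η => log (Zpath μ q0 p η)) (∫ z, p z * ell q0 p z ∂μ) 1) :
    ∀ᶠ η in 𝓝 1, 0 < Zpath μ q0 p η := by
  by_cases hgt : ∃ η > 1, 0 < Zpath μ q0 p η
  · obtain ⟨η, hη, hZη⟩ := hgt
    filter_upwards [Ioo_mem_nhds one_pos hη] with t ht
    refine (ordConnected_setOf_Zpath_pos hq0m hpm hq0 hp (by simp [hq0one])).out ?_ hZη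
      ⟨ht.1.le, ht.2.le⟩
    simp [Zpath_zero, hq0one]
  push Not at hgt
  have hZ1 : Zpath μ q0 p 1 = 1 := (integral_congr_ae (gammaPath_one_ae_eq hp hsupp)).trans hpone
  have hm : ∫ z, p z * ell q0 p z ∂μ = 0 := by
    refine hL.eq_zero_of_eventuallyEq_const (uniqueDiffWithinAt_Ioi 1) ?_
    filter_upwards [self_mem_nhdsWithin] with η (hη : 1 < η)
    rw [hZ1, le_antisymm (hgt η hη) (integral_nonneg (gammaPath_nonneg hq0 hp η)),
      log_zero, log_one]
  have hell_neg : ∀ z, p z * log (q0 z / p z) = -(p z * ell q0 p z) := fun z => by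
    rw [ell, ← inv_div, log_inv, mul_neg]
  have hpq : p =ᵐ[μ] q0 := ae_eq_of_integral_mul_log_div_eq_zero hp hq0
    (.of_integral_ne_zero (by simp [hpone])) (.of_integral_ne_zero (by simp [hq0one]))
    (hpone.trans hq0one.symm) hsupp (by simp only [hell_neg]; exact hint.neg)
    (by simp only [hell_neg, integral_neg, hm, neg_zero])
  have := hgt 2 one_lt_two
  rw [Zpath_of_ae_eq hq0 hpq.symm, hq0one] at this
  norm_num at this

lemma integral_piPath (hZ : 0 < Zpath μ q0 p η) : ∫ z, piPath μ q0 p η z ∂μ = 1 := by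
  simp only [piPath, integral_div]
  exact div_self hZ.ne'

lemma piPath_zero (hq0one : ∫ z, q0 z ∂μ = 1) : piPath μ q0 p 0 = q0 := by
  ext z
  rw [piPath, Zpath_zero, hq0one, div_one, gammaPath_zero]

lemma piPath_one_ae_eq (hp : ∀ z, 0 ≤ p z) (hpone : ∫ z, p z ∂μ = 1)
    (hsupp : ∀ᵐ z ∂μ, 0 < p z → 0 < q0 z) : piPath μ q0 p 1 =ᵐ[μ] p := by
  have hZ1 : Zpath μ q0 p 1 = 1 := (integral_congr_ae (gammaPath_one_ae_eq hp hsupp)).trans hpone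
  filter_upwards [gammaPath_one_ae_eq hp hsupp] with z hz
  rw [piPath, hZ1, div_one, hz]

lemma ae_pos_of_piPath_ne_zero (hq0m : Measurable q0) (hpm : Measurable p)
    (hq0 : ∀ z, 0 ≤ q0 z) (hp : ∀ z, 0 ≤ p z) (hq0one : ∫ z, q0 z ∂μ = 1)
    (hpi : Integrable p μ) (hZ : ∀ η ∈ Ioo (0 : ℝ) 1, 0 < Zpath μ q0 p η)
    (hL : ContinuousAt (fun η => log (Zpath μ q0 p η)) β) :
    ∀ᵐ z ∂μ, piPath μ q0 p β z ≠ 0 → 0 < q0 z ∧ 0 < p z := by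
  rcases eq_or_ne β 0 with rfl | hβ0
  · filter_upwards [ae_pos_of_continuousAt_log_Zpath hq0m hpm hq0 hp hq0one hpi hZ hL]
      with z hz hne
    have hq : 0 < q0 z := (hq0 z).lt_of_ne' (by rwa [piPath_zero hq0one] at hne)
    exact ⟨hq, hz hq⟩
  · exact ae_of_all _ fun z hne => (support_gammaPath hq0 hp hβ0).subset (div_ne_zero_iff.mp hne).1

lemma eventually_Zpath_pos (hq0m : Measurable q0) (hpm : Measurable p)
    (hq0 : ∀ z, 0 ≤ q0 z) (hp : ∀ z, 0 ≤ p z) (hq0one : ∫ z, q0 z ∂μ = 1)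
    (hpone : ∫ z, p z ∂μ = 1) (hsupp : ∀ᵐ z ∂μ, 0 < p z → 0 < q0 z)
    (hZ : ∀ η ∈ Icc (0 : ℝ) 1, 0 < Zpath μ q0 p η) (hβ : β ∈ Icc (0 : ℝ) 1)
    (hint : Integrable (fun z => piPath μ q0 p β z * ell q0 p z) μ)
    (hL : HasDerivAt (fun η => log (Zpath μ q0 p η)) (∫ z, piPath μ q0 p β z * ell q0 p z ∂μ) β) :
    ∀ᶠ η in 𝓝 β, 0 < Zpath μ q0 p η := by
  rcases hβ.1.eq_or_lt with rfl | hβ0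
  · have hq0p := ae_pos_of_continuousAt_log_Zpath hq0m hpm hq0 hp hq0one
      (.of_integral_ne_zero (by simp [hpone])) (fun η hη => hZ η (Ioo_subset_Icc_self hη))
      hL.continuousAt
    rw [piPath_zero hq0one] at hint hL
    exact eventually_nhds_zero_Zpath_pos hq0m hpm hq0 hp hq0one hpone hq0p (hZ 1 (by simp)) hint hL
  rcases hβ.2.eq_or_lt with rfl | hβ1
  · have hπp : (fun z => piPath μ q0 p 1 z * ell q0 p z) =ᵐ[μ] fun z => p z * ell q0 p z :=
      (piPath_one_ae_eq hp hpone hsupp).mono fun z hz => by simp only [hz]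
    rw [integral_congr_ae hπp] at hL
    exact eventually_nhds_one_Zpath_pos hq0m hpm hq0 hp hq0one hpone hsupp (hint.congr hπp) hL
  · filter_upwards [Ioo_mem_nhds hβ0 hβ1] with η hη using hZ η (Ioo_subset_Icc_self hη)

lemma integral_mul_log_piPath {w : X → ℝ}
    (hw : ∀ᵐ z ∂μ, w z ≠ 0 → 0 < q0 z ∧ 0 < p z) (hwi : Integrable w μ)
    (hw_one : ∫ z, w z ∂μ = 1) (hlog : Integrable (fun z => w z * log (q0 z)) μ)
    (hell : Integrable (fun z => w z * ell q0 p z) μ) (hZ : 0 < Zpath μ q0 p η) :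
    ∫ z, w z * log (piPath μ q0 p η z) ∂μ =
      ∫ z, w z * log (q0 z) ∂μ + η * ∫ z, w z * ell q0 p z ∂μ - log (Zpath μ q0 p η) := by
  have h : (fun z => w z * log (piPath μ q0 p η z)) =ᵐ[μ]
      fun z => w z * log (q0 z) + η * (w z * ell q0 p z) - w z * log (Zpath μ q0 p η) := by
    filter_upwards [hw] with z hz
    by_cases h0 : w z = 0
    · simp [h0]
    obtain ⟨hq, hp⟩ := hz h0
    rw [log_piPath_of_pos hq hp hZ]
    ring
  have hsum : Integrable (fun z => w z * log (q0 z) + η * (w z * ell q0 p z)) μ :=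
    hlog.add (hell.const_mul η)
  rw [integral_congr_ae h, integral_sub hsum (hwi.mul_const _),
    integral_add hlog (hell.const_mul η), integral_const_mul, integral_mul_const, hw_one, one_mul]

end

theorem cross_entropy_first_derivative_vanishes_general
    (μ : Measure X) (q0 p : X → ℝ)
    (hq0m : Measurable q0) (hq0nn : ∀ z, 0 ≤ q0 z) (hq0one : ∫ z, q0 z ∂μ = 1)
    (hpm : Measurable p) (hpnn : ∀ z, 0 ≤ p z) (hpone : ∫ z, p z ∂μ = 1)
    (hsupp : ∀ᵐ z ∂μ, 0 < p z → 0 < q0 z)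
    (hZ : ∀ η ∈ Set.Icc (0 : ℝ) 1,
      Integrable (gammaPath q0 p η) μ ∧ 0 < Zpath μ q0 p η)
    (β : ℝ) (hβ : β ∈ Set.Icc (0 : ℝ) 1)
    (hellint : Integrable (fun z => piPath μ q0 p β z * |ell q0 p z|) μ)
    (hlogq0int : Integrable (fun z => piPath μ q0 p β z * |Real.log (q0 z)|) μ)
    (hL : HasDerivAt (fun t => Real.log (Zpath μ q0 p t))
      (∫ z, piPath μ q0 p β z * ell q0 p z ∂μ) β) :
    HasDerivAt (fun η => -∫ z, piPath μ q0 p β z * Real.log (piPath μ q0 p η z) ∂μ)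
      0 β := by
  have hZpos : ∀ η ∈ Icc (0 : ℝ) 1, 0 < Zpath μ q0 p η := fun η hη => (hZ η hη).2
  have hπ_nonneg : ∀ z, 0 ≤ piPath μ q0 p β z :=
    fun z => div_nonneg (gammaPath_nonneg hq0nn hpnn β z) (hZpos β hβ).le
  have hπm : Measurable (piPath μ q0 p β) := (measurable_gammaPath hq0m hpm β).div_const _
  have hint_ell := hellint.mul_of_integrable_mul_abs hπ_nonneg
    (hπm.mul (hpm.div hq0m).log).aestronglyMeasurable
  have hint_log := hlogq0int.mul_of_integrable_mul_abs hπ_nonneg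
    (hπm.mul hq0m.log).aestronglyMeasurable
  have hsuppβ := ae_pos_of_piPath_ne_zero hq0m hpm hq0nn hpnn hq0one
    (.of_integral_ne_zero (by simp [hpone])) (fun η hη => hZpos η (Ioo_subset_Icc_self hη))
    hL.continuousAt
  have hnear := eventually_Zpath_pos hq0m hpm hq0nn hpnn hq0one hpone hsupp hZpos hβ hint_ell hL
  set c := ∫ z, piPath μ q0 p β z * log (q0 z) ∂μ
  set m := ∫ z, piPath μ q0 p β z * ell q0 p z ∂μ
  have heq : (fun η => -∫ z, piPath μ q0 p β z * log (piPath μ q0 p η z) ∂μ) =ᶠ[𝓝 β]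
      fun η => log (Zpath μ q0 p η) - c - η * m := by
    filter_upwards [hnear] with η hη
    rw [integral_mul_log_piPath hsuppβ ((hZ β hβ).1.div_const _) (integral_piPath (hZpos β hβ))
      hint_log hint_ell hη]
    ring
  have hd := (hL.sub_const c).sub ((hasDerivAt_id β).mul_const m)
  rw [one_mul, sub_self] at hd
  exact hd.congr_of_eventuallyEq heq

/-- If `L = log Z` is differentiable at `β` with `L′(β) = ∫ π_β ℓ dμ`, then the
cross-entropy `h_β(η) = −∫ π_β log π_η dμ` is differentiable at `η = β` with `h_β′(β) = 0`:
the first-order Taylor term of `h_β` around `β` vanishes. -/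
theorem cross_entropy_first_derivative_vanishes
    (μ : Measure X) [SigmaFinite μ] (q0 p : X → ℝ)
    (hq0m : Measurable q0) (hq0nn : ∀ z, 0 ≤ q0 z) (hq0one : ∫ z, q0 z ∂μ = 1)
    (hpm : Measurable p) (hpnn : ∀ z, 0 ≤ p z) (hpone : ∫ z, p z ∂μ = 1)
    (hsupp : ∀ᵐ z ∂μ, 0 < p z → 0 < q0 z)
    (hZ : ∀ η ∈ Set.Icc (0 : ℝ) 1,
      Integrable (gammaPath q0 p η) μ ∧ 0 < Zpath μ q0 p η)
    (β : ℝ) (hβ : β ∈ Set.Icc (0 : ℝ) 1)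
    (hellint : Integrable (fun z => piPath μ q0 p β z * |ell q0 p z|) μ)
    (hlogq0int : Integrable (fun z => piPath μ q0 p β z * |Real.log (q0 z)|) μ)
    (hL : HasDerivAt (fun t => Real.log (Zpath μ q0 p t))
      (∫ z, piPath μ q0 p β z * ell q0 p z ∂μ) β) :
    HasDerivAt (fun η => -∫ z, piPath μ q0 p β z * Real.log (piPath μ q0 p η z) ∂μ)
      0 β :=
  cross_entropy_first_derivative_vanishes_general μ q0 p hq0m hq0nn hq0one hpm hpnn hpone hsupp hZ β
    hβ hellint hlogq0int hL
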